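/- arXiv:2504.21542 — 2 statements merged into one kernel-verified Lean document; each statement's English description precedes it below -/
import Mathlib

section
/- Let G = BS(m, n) = ⟨t, a | t a^n t⁻¹ = a^m⟩ with 0 < n ≤ |m|, and let p be a prime. Write m = p^r m₁, n = p^s n₁ with p ∤ m₁n₁. If r ≠ s, or if r = s and m₁ ≢ n₁ (mod p), then a^(p^ξ) lies in the intersection (N_p)_ω(G) of all normal subgroups of G of p-power index, where ξ = min{r, s}. -/
-- order of a ^ (p^u * w) when orderOf a = p^e and p ∤ w
lemma aux_ord {Q : Type*} [Group Q] {p : ℕ} (hp : p.Prime) (a : Q) (e u : ℕ) (w : ℤ)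
    (he : orderOf a = p ^ e) (hw : ¬ (p : ℤ) ∣ w) :
    orderOf (a ^ ((p : ℤ) ^ u * w)) = p ^ (e - u) := by
  have hpi : Prime (p : ℤ) := Nat.prime_iff_prime_int.mp hp
  have hcop : IsCoprime ((p : ℤ) ^ (e - u)) w :=
    IsCoprime.pow_left ((hpi.coprime_iff_not_dvd).mpr hw)
  have h1 : (a ^ ((p : ℤ) ^ u * w)) ^ (p ^ (e - u)) = 1 := by
    rw [← zpow_natCast, ← zpow_mul]
    rw [← orderOf_dvd_iff_zpow_eq_one, he]
    push_cast
    have h0 : ((p : ℤ) ^ e) ∣ (p : ℤ) ^ u * (p : ℤ) ^ (e - u) := by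
      rw [← pow_add]
      exact pow_dvd_pow _ (by omega)
    have h0' : (p : ℤ) ^ u * w * (p : ℤ) ^ (e - u) = (p : ℤ) ^ u * (p : ℤ) ^ (e - u) * w := by
      ring
    rw [h0']
    exact h0.mul_right w
  have hdvd : orderOf (a ^ ((p : ℤ) ^ u * w)) ∣ p ^ (e - u) :=
    orderOf_dvd_of_pow_eq_one h1
  refine Nat.dvd_antisymm hdvd ?_
  set q := orderOf (a ^ ((p : ℤ) ^ u * w)) with hq
  have h2 : (a ^ ((p : ℤ) ^ u * w)) ^ (q : ℤ) = 1 := by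
    rw [zpow_natCast]; exact pow_orderOf_eq_one _
  rw [← zpow_mul, ← orderOf_dvd_iff_zpow_eq_one, he] at h2
  by_cases hue : e ≤ u
  · simp [Nat.sub_eq_zero_of_le hue]
  · push_neg at hue
    have h3 : ((p : ℤ) ^ u) * ((p : ℤ) ^ (e - u)) ∣ (p : ℤ) ^ u * (w * q) := by
      rw [← pow_add]
      have huu : u + (e - u) = e := by omega
      rw [huu, ← mul_assoc]
      exact_mod_cast h2
    have hpu : ((p : ℤ) ^ u) ≠ 0 := pow_ne_zero _ (by exact_mod_cast hp.ne_zero)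
    have h4 : ((p : ℤ) ^ (e - u)) ∣ w * q := (mul_dvd_mul_iff_left hpu).mp h3
    have h5 : ((p : ℤ) ^ (e - u)) ∣ (q : ℤ) := hcop.dvd_of_dvd_mul_left h4
    exact_mod_cast h5

lemma case_lt {Q : Type*} [Group Q] {p : ℕ} (hp : p.Prime) {t a : Q} {r s e : ℕ} {m₁ n₁ : ℤ}
    (hm₁ : ¬ (p : ℤ) ∣ m₁) (hn₁ : ¬ (p : ℤ) ∣ n₁)
    (hrel : t * a ^ ((p : ℤ) ^ s * n₁) * t⁻¹ = a ^ ((p : ℤ) ^ r * m₁))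
    (he : orderOf a = p ^ e) (hrs : r < s) : e ≤ r := by
  by_contra h
  push_neg at h
  have hsc : SemiconjBy t (a ^ ((p : ℤ) ^ s * n₁)) (a ^ ((p : ℤ) ^ r * m₁)) := by
    unfold SemiconjBy
    rw [← hrel]; group
  have key := SemiconjBy.orderOf_eq t hsc
  rw [aux_ord hp a e s n₁ he hn₁, aux_ord hp a e r m₁ he hm₁] at key
  have := Nat.pow_right_injective hp.two_le key
  omega

lemma key_pgroup {Q : Type*} [Group Q] {p : ℕ} (hp : p.Prime) (hQ : IsPGroup p Q)
    (t a : Q) (r s : ℕ) (m₁ n₁ : ℤ)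
    (hm₁ : ¬ (p : ℤ) ∣ m₁) (hn₁ : ¬ (p : ℤ) ∣ n₁)
    (hcase : r ≠ s ∨ (r = s ∧ ¬ (p : ℤ) ∣ (m₁ - n₁)))
    (hrel : t * a ^ ((p : ℤ) ^ s * n₁) * t⁻¹ = a ^ ((p : ℤ) ^ r * m₁)) :
    a ^ (p ^ (min r s)) = 1 := by
  haveI : Fact p.Prime := ⟨hp⟩
  obtain ⟨e, he⟩ := IsPGroup.iff_orderOf.mp hQ a
  suffices h : e ≤ min r s by
    apply orderOf_dvd_iff_pow_eq_one.mp
    rw [he]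
    exact pow_dvd_pow p h
  rcases hcase with hne | ⟨heq, hd⟩
  · rcases lt_or_gt_of_ne hne with h1 | h1
    · have := case_lt hp hm₁ hn₁ hrel he h1; omega
    · have hrel' : t⁻¹ * a ^ ((p : ℤ) ^ r * m₁) * t⁻¹⁻¹ = a ^ ((p : ℤ) ^ s * n₁) := by
        rw [← hrel]; group
      have := case_lt hp hn₁ hm₁ hrel' he h1; omega
  · subst heq
    simp only [min_self]
    by_contra h
    push_neg at h
    -- b = a ^ p^r
    obtain ⟨b, hb⟩ : ∃ b : Q, b = a ^ ((p : ℤ) ^ r) := ⟨_, rfl⟩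
    have hbz : ∀ z : ℤ, b ^ z = a ^ ((p : ℤ) ^ r * z) := fun z => by
      rw [hb, ← zpow_mul]
    have hrelb : t * b ^ n₁ * t⁻¹ = b ^ m₁ := by
      rw [hbz, hbz]; exact hrel
    have claim : ∀ j : ℕ, t ^ j * b ^ (n₁ ^ j) * (t ^ j)⁻¹ = b ^ (m₁ ^ j) := by
      intro j
      induction j with
      | zero => simp
      | succ j ih =>
        have step1 : t ^ j * b ^ (n₁ ^ (j + 1)) * (t ^ j)⁻¹ = (b ^ n₁) ^ (m₁ ^ j) := by
          have : b ^ (n₁ ^ (j + 1)) = (b ^ (n₁ ^ j)) ^ n₁ := by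
            rw [← zpow_mul, ← pow_succ]
          rw [this, ← conj_zpow, ih, ← zpow_mul, mul_comm, zpow_mul]
        calc t ^ (j + 1) * b ^ (n₁ ^ (j + 1)) * (t ^ (j + 1))⁻¹
            = t * (t ^ j * b ^ (n₁ ^ (j + 1)) * (t ^ j)⁻¹) * t⁻¹ := by
              rw [pow_succ']; group
          _ = t * (b ^ n₁) ^ (m₁ ^ j) * t⁻¹ := by rw [step1]
          _ = (t * b ^ n₁ * t⁻¹) ^ (m₁ ^ j) := by rw [conj_zpow]
          _ = b ^ (m₁ ^ (j + 1)) := by rw [hrelb, ← zpow_mul, mul_comm, ← pow_succ]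
    obtain ⟨k, hk⟩ := hQ t
    have h2 := claim (p ^ k)
    rw [hk] at h2
    simp only [inv_one, one_mul, mul_one] at h2
    -- b ^ (m₁^(p^k) - n₁^(p^k)) = 1
    have h3 : b ^ (m₁ ^ (p ^ k) - n₁ ^ (p ^ k)) = 1 := by
      rw [zpow_sub, h2, mul_inv_cancel]
    have h4 : a ^ ((p : ℤ) ^ r * (m₁ ^ (p ^ k) - n₁ ^ (p ^ k))) = 1 := by rw [← hbz]; exact h3
    rw [← orderOf_dvd_iff_zpow_eq_one, he] at h4
    have h5 : ((p : ℤ) ^ r * (p : ℤ)) ∣ (p : ℤ) ^ r * (m₁ ^ (p ^ k) - n₁ ^ (p ^ k)) := by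
      refine dvd_trans ?_ h4
      rw [← pow_succ]
      exact_mod_cast (pow_dvd_pow (p : ℤ) (by omega : r + 1 ≤ e))
    have hpu : ((p : ℤ) ^ r) ≠ 0 := pow_ne_zero _ (by exact_mod_cast hp.ne_zero)
    have h6 : (p : ℤ) ∣ (m₁ ^ (p ^ k) - n₁ ^ (p ^ k)) := (mul_dvd_mul_iff_left hpu).mp h5
    -- Fermat: D ≡ m₁ - n₁ mod p
    apply hd
    rw [← ZMod.intCast_zmod_eq_zero_iff_dvd] at h6 ⊢
    push_cast at h6 ⊢
    rwa [ZMod.pow_card_pow, ZMod.pow_card_pow] at h6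

/-- `BS(m,n) = ⟨t, a | t a^n t⁻¹ = a^m⟩`; generator `false` is `a`, generator `true` is `t`. -/
theorem stmt_11 (p : ℕ) (hp : p.Prime) (m n : ℤ) (hmn : 0 < n ∧ n ≤ |m|)
    (r s : ℕ) (m₁ n₁ : ℤ)
    (hm : m = (p : ℤ) ^ r * m₁) (hn : n = (p : ℤ) ^ s * n₁)
    (hm₁ : ¬ (p : ℤ) ∣ m₁) (hn₁ : ¬ (p : ℤ) ∣ n₁)
    (hcase : r ≠ s ∨ (r = s ∧ ¬ (p : ℤ) ∣ (m₁ - n₁)))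
    (N : Subgroup (PresentedGroup
      ({FreeGroup.of true * FreeGroup.of false ^ n * (FreeGroup.of true)⁻¹ *
          (FreeGroup.of false ^ m)⁻¹} : Set (FreeGroup Bool))))
    (hN : N.Normal) (hidx : ∃ k : ℕ, N.index = p ^ k) :
    (PresentedGroup.of false) ^ (p ^ (min r s)) ∈ N := by
  haveI := hN
  let rels : Set (FreeGroup Bool) :=
    {FreeGroup.of true * FreeGroup.of false ^ n * (FreeGroup.of true)⁻¹ *
      (FreeGroup.of false ^ m)⁻¹}
  let G := PresentedGroup rels
  -- the relation holds in G
  have hrelG : (PresentedGroup.of true : G) * (PresentedGroup.of false) ^ n *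
      (PresentedGroup.of true)⁻¹ * ((PresentedGroup.of false) ^ m)⁻¹ = 1 := by
    have hmem : (FreeGroup.of true * FreeGroup.of false ^ n * (FreeGroup.of true)⁻¹ *
        (FreeGroup.of false ^ m)⁻¹ : FreeGroup Bool) ∈ Subgroup.normalClosure rels :=
      Subgroup.subset_normalClosure (Set.mem_singleton _)
    have : (PresentedGroup.mk rels) (FreeGroup.of true * FreeGroup.of false ^ n *
        (FreeGroup.of true)⁻¹ * (FreeGroup.of false ^ m)⁻¹) = 1 :=
      (QuotientGroup.eq_one_iff _).mpr hmem
    simp only [map_mul, map_zpow, map_inv] at this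
    exact this
  -- pass to the quotient
  obtain ⟨k, hk⟩ := hidx
  rw [Subgroup.index_eq_card] at hk
  haveI : Finite (G ⧸ N) := Nat.finite_of_card_ne_zero (by
    rw [hk]; exact pow_ne_zero _ hp.ne_zero)
  have hPG : IsPGroup p (G ⧸ N) := IsPGroup.of_card hk
  set A : G ⧸ N := ((PresentedGroup.of false : G) : G ⧸ N) with hA
  set T : G ⧸ N := ((PresentedGroup.of true : G) : G ⧸ N) with hT
  have hrelQ : T * A ^ ((p : ℤ) ^ s * n₁) * T⁻¹ = A ^ ((p : ℤ) ^ r * m₁) := by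
    have := congrArg (QuotientGroup.mk' N) hrelG
    simp only [map_mul, map_zpow, map_inv, map_one] at this
    rw [mul_inv_eq_one] at this
    rw [← hn, ← hm]
    exact this
  have hone := key_pgroup hp hPG T A r s m₁ n₁ hm₁ hn₁ hcase hrelQ
  rw [← QuotientGroup.eq_one_iff]
  push_cast
  exact hone
end

section
/- Let P be a finite p-group and let x ∈ P. If x ∈ γ_c(P) and x^e = [t, x^n] for some t ∈ P with p ∤ e and p ∤ n, then x ∈ γ_{c+1}(P). Consequently x ∈ γ_ω(P) = 1, i.e., x = 1. -/
open scoped commutatorElement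

theorem stmt_13 (p : ℕ) (hp : p.Prime) (P : Type*) [Group P] [Finite P]
    (hP : IsPGroup p P) (x t : P) (e n : ℤ)
    (he : ¬ (p : ℤ) ∣ e) (hn : ¬ (p : ℤ) ∣ n)
    (hord : ∃ k : ℕ, orderOf x = p ^ k)
    (hcomm : x ^ e = ⁅t, x ^ n⁆) :
    (∀ c : ℕ, x ∈ (⊤ : Subgroup P).lowerCentralSeries c → x ∈ (⊤ : Subgroup P).lowerCentralSeries (c + 1)) ∧ x = 1 := by
  obtain ⟨k, hk⟩ := hord
  have hcop : IsCoprime e ((p : ℤ) ^ k) := by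
    apply IsCoprime.pow_right
    exact IsCoprime.symm (((Nat.prime_iff_prime_int.mp hp).coprime_iff_not_dvd).mpr he)
  obtain ⟨a, b, hab⟩ := hcop
  have hxpk : x ^ ((p : ℤ) ^ k) = 1 := by
    have : x ^ ((p : ℕ) ^ k) = 1 := by rw [← hk]; exact pow_orderOf_eq_one x
    rw [← zpow_natCast] at this
    simpa using this
  have h1 : x ^ (b * (p : ℤ) ^ k) = 1 := by rw [mul_comm, zpow_mul, hxpk, one_zpow]
  have hx_eq : (x ^ e) ^ a = x := by
    calc (x ^ e) ^ a = x ^ (a * e) := by rw [← zpow_mul, mul_comm]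
      _ = x ^ (a * e) * x ^ (b * (p : ℤ) ^ k) := by rw [h1, mul_one]
      _ = x ^ (a * e + b * (p : ℤ) ^ k) := (zpow_add x _ _).symm
      _ = x := by rw [hab, zpow_one]
  have main : ∀ c : ℕ, x ∈ (⊤ : Subgroup P).lowerCentralSeries c → x ∈ (⊤ : Subgroup P).lowerCentralSeries (c + 1) := by
    intro c hc
    have hxe : x ^ e ∈ (⊤ : Subgroup P).lowerCentralSeries (c + 1) := by
      rw [hcomm]
      have : ⁅x ^ n, t⁆ ∈ (⊤ : Subgroup P).lowerCentralSeries (c + 1) := by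
        rw [Subgroup.lowerCentralSeries_succ]
        exact Subgroup.commutator_mem_commutator (Subgroup.zpow_mem _ hc n)
          (Subgroup.mem_top t)
      have h2 := ((⊤ : Subgroup P).lowerCentralSeries (c + 1)).inv_mem this
      rwa [commutatorElement_inv] at h2
    rw [← hx_eq]
    exact Subgroup.zpow_mem _ hxe a
  refine ⟨main, ?_⟩
  have : Fact p.Prime := ⟨hp⟩
  have hnil : Group.IsNilpotent P := hP.isNilpotent
  obtain ⟨m, hm⟩ := nilpotent_iff_lowerCentralSeries.mp hnil
  have hmem : ∀ c : ℕ, x ∈ (⊤ : Subgroup P).lowerCentralSeries c := by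
    intro c
    induction c with
    | zero => exact Subgroup.mem_top x
    | succ c ih => exact main c ih
  have := hmem m
  rw [hm] at this
  simpa using this
end
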